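/- arXiv:0812.4529 — 3 statements merged into one kernel-verified Lean document; each statement's English description precedes it below -/
import Mathlib

section
/- Let d* be a real number with |d*| < 1 and set ε = (1/2π) log((1+d*)/(1-d*)). Then the zeros of δ(s) = cos²(πs) + d*² sin²(πs) are exactly the points s = (1-2n)/2 ± iε for integers n, and at each such zero s_n^± one has δ'(s_n^±) = ±2πi d*. -/
open Complex

/-!
With `t = πε = artanh d*` one has `sinh t = d* cosh t`, and then
`cos(πs + it) cos(πs - it) = cos²(πs) + sinh² t = cosh² t · δ(s)`, so the zeros of `δ` are
the zeros of the two shifted cosines. At a zero, `δ'(s) = π(d*² - 1) sin(2πs)` and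
`sin(2πs) = ∓ i sinh 2t = ∓ 2i d* cosh² t`; the identity `(1 - d*²) cosh² t = 1` gives `±2πi d*`.
-/

noncomputable def delta (d s : ℂ) : ℂ :=
  cos (Real.pi * s) ^ 2 + d ^ 2 * sin (Real.pi * s) ^ 2

theorem delta_neg (d : ℂ) : delta (-d) = delta d := by
  funext s
  simp only [delta, neg_sq]

namespace Complex

section TanhEq

variable {d t : ℂ}

theorem one_sub_sq_mul_cosh_sq (h : sinh t = d * cosh t) : (1 - d ^ 2) * cosh t ^ 2 = 1 := by
  linear_combination cosh_sq_sub_sinh_sq t + (sinh t + d * cosh t) * h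

theorem cosh_ne_zero_of_sinh_eq_mul_cosh (h : sinh t = d * cosh t) : cosh t ≠ 0 := by
  intro h0
  simpa [h0] using one_sub_sq_mul_cosh_sq h

theorem cos_add_mul_I_mul_cos_sub_mul_I (z t : ℂ) :
    cos (z + t * I) * cos (z - t * I) = cos z ^ 2 + sinh t ^ 2 := by
  rw [cos_add, cos_sub, cos_mul_I, sin_mul_I]
  linear_combination (-(sin z * sinh t) ^ 2) * I_sq + cos z ^ 2 * cosh_sq_sub_sinh_sq t
    + sinh t ^ 2 * sin_sq_add_cos_sq z

theorem cos_sq_add_sq_mul_sin_sq_eq_zero_iff (h : sinh t = d * cosh t) (z : ℂ) :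
    cos z ^ 2 + d ^ 2 * sin z ^ 2 = 0 ↔ cos (z + t * I) = 0 ∨ cos (z - t * I) = 0 := by
  have hfactor : cos (z + t * I) * cos (z - t * I)
      = cosh t ^ 2 * (cos z ^ 2 + d ^ 2 * sin z ^ 2) := by
    rw [cos_add_mul_I_mul_cos_sub_mul_I]
    linear_combination (sinh t + d * cosh t) * h - cos z ^ 2 * one_sub_sq_mul_cosh_sq h
      - d ^ 2 * cosh t ^ 2 * sin_sq_add_cos_sq z
  rw [← mul_eq_zero, hfactor, mul_eq_zero,
    or_iff_right (pow_ne_zero 2 (cosh_ne_zero_of_sinh_eq_mul_cosh h))]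

end TanhEq

theorem cos_pi_mul_eq_zero_iff (w : ℂ) : cos (Real.pi * w) = 0 ↔ ∃ n : ℤ, w = (1 - 2 * n) / 2 := by
  have hπ : (Real.pi : ℂ) ≠ 0 := ofReal_ne_zero.mpr Real.pi_ne_zero
  rw [cos_eq_zero_iff]
  constructor
  · rintro ⟨k, hk⟩
    refine ⟨-k, mul_left_cancel₀ hπ ?_⟩
    push_cast
    linear_combination hk
  · rintro ⟨n, rfl⟩
    exact ⟨-n, by push_cast; ring⟩

theorem sin_two_pi_mul_half_odd_add (n : ℤ) (e : ℂ) :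
    sin (2 * Real.pi * ((1 - 2 * n) / 2 + I * e)) = -(sinh (2 * (Real.pi * e)) * I) := by
  rw [show 2 * Real.pi * ((1 - 2 * n) / 2 + I * e)
      = 2 * (Real.pi * e) * I + Real.pi - n * (2 * Real.pi) by ring,
    sin_sub_int_mul_two_pi, sin_add_pi, sin_mul_I]

end Complex

section Delta

variable {d e : ℂ}

theorem delta_eq_zero_iff (h : sinh (Real.pi * e) = d * cosh (Real.pi * e)) (s : ℂ) :
    delta d s = 0 ↔ ∃ n : ℤ, s = (1 - 2 * n) / 2 + I * e ∨ s = (1 - 2 * n) / 2 - I * e := by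
  rw [delta, cos_sq_add_sq_mul_sin_sq_eq_zero_iff h,
    show Real.pi * s + Real.pi * e * I = Real.pi * (s + I * e) by ring,
    show Real.pi * s - Real.pi * e * I = Real.pi * (s - I * e) by ring,
    cos_pi_mul_eq_zero_iff, cos_pi_mul_eq_zero_iff, ← exists_or]
  simp only [eq_sub_iff_add_eq, sub_eq_iff_eq_add, or_comm]

theorem hasDerivAt_delta (d s : ℂ) :
    HasDerivAt (delta d) (Real.pi * (d ^ 2 - 1) * sin (2 * Real.pi * s)) s := by
  have hlin : HasDerivAt (fun z : ℂ => Real.pi * z) (Real.pi : ℂ) s := by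
    simpa using (hasDerivAt_id s).const_mul (Real.pi : ℂ)
  refine ((hlin.ccos.pow 2).add ((hlin.csin.pow 2).const_mul (d ^ 2))).congr_deriv ?_
  rw [show 2 * (Real.pi : ℂ) * s = 2 * (Real.pi * s) by ring, sin_two_mul]
  push_cast
  ring

theorem deriv_delta_half_odd_add (h : sinh (Real.pi * e) = d * cosh (Real.pi * e)) (n : ℤ) :
    deriv (delta d) ((1 - 2 * n) / 2 + I * e) = 2 * Real.pi * I * d := by
  rw [(hasDerivAt_delta d _).deriv, sin_two_pi_mul_half_odd_add, sinh_two_mul, h]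
  linear_combination (2 * Real.pi * I * d) * one_sub_sq_mul_cosh_sq h

end Delta

theorem Real.sinh_artanh_eq_mul_cosh {d : ℝ} (hd : d ∈ Set.Ioo (-1) 1) :
    sinh (artanh d) = d * cosh (artanh d) := by
  have htanh := tanh_artanh hd
  rw [tanh_eq_sinh_div_cosh, div_eq_iff (cosh_pos _).ne'] at htanh
  exact htanh

/-- The zeros of `δ(s) = cos²(πs) + d*² sin²(πs)` are exactly `s = (1-2n)/2 ± iε`, `n ∈ ℤ`,
where `ε = (1/2π) log((1+d*)/(1-d*))`, and at these zeros `δ'(s_n^±) = ± 2πi d*`. -/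
theorem stmt4 (d : ℝ) (hd : |d| < 1) (ε : ℝ)
    (hε : ε = (1 / (2 * Real.pi)) * Real.log ((1 + d) / (1 - d))) :
    (∀ s : ℂ,
        Complex.cos (Real.pi * s) ^ 2 + (d : ℂ) ^ 2 * Complex.sin (Real.pi * s) ^ 2 = 0 ↔
          ∃ n : ℤ, s = ((1 - 2 * (n : ℂ)) / 2 + Complex.I * (ε : ℂ)) ∨
            s = ((1 - 2 * (n : ℂ)) / 2 - Complex.I * (ε : ℂ))) ∧
      (∀ n : ℤ,
        deriv (fun s : ℂ =>
            Complex.cos (Real.pi * s) ^ 2 + (d : ℂ) ^ 2 * Complex.sin (Real.pi * s) ^ 2)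
          ((1 - 2 * (n : ℂ)) / 2 + Complex.I * (ε : ℂ)) = 2 * Real.pi * Complex.I * d ∧
        deriv (fun s : ℂ =>
            Complex.cos (Real.pi * s) ^ 2 + (d : ℂ) ^ 2 * Complex.sin (Real.pi * s) ^ 2)
          ((1 - 2 * (n : ℂ)) / 2 - Complex.I * (ε : ℂ)) = -(2 * Real.pi * Complex.I * d)) := by
  have hd' : d ∈ Set.Ioo (-1) 1 := abs_lt.mp hd
  have hπε : Real.pi * ε = Real.artanh d := by
    rw [hε, Real.artanh_eq_half_log (Set.Ioo_subset_Icc_self hd')]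
    field_simp
  have h : sinh (Real.pi * ε) = d * cosh (Real.pi * ε) := by
    have hreal := Real.sinh_artanh_eq_mul_cosh hd'
    rw [← hπε] at hreal
    exact_mod_cast hreal
  have hneg : sinh (Real.pi * -(ε : ℂ)) = -d * cosh (Real.pi * -(ε : ℂ)) := by
    rw [mul_neg, sinh_neg, cosh_neg, h, neg_mul]
  refine ⟨delta_eq_zero_iff h, fun n => ⟨deriv_delta_half_odd_add h n, ?_⟩⟩
  have hminus := deriv_delta_half_odd_add hneg n
  rwa [delta_neg, mul_neg, ← sub_eq_add_neg, mul_neg] at hminus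
end

section
/- Let μ₊, μ₋ > 0 and ν₊, ν₋ ∈ (0, 1/2). With b = (1-ν₊)/μ₊ + (1-ν₋)/μ₋, e = ν₊/μ₊ + ν₋/μ₋, d* = ((1-2ν₊)/(2μ₊) - (1-2ν₋)/(2μ₋))/b, d₀ = (1-d*²)^{1/4}, and ν defined by 1-ν = ((1-ν₊)/μ₊ + (1-ν₋)/μ₋)/((1/μ₊ + 1/μ₋) cosh²(πε)) with ε = (1/π) artanh(d*), one has 1 - ν = b d₀⁴/(b+e). Moreover 0 < ν < 1/2, and if μ₊ = μ₋ = μ and ν₊ = ν₋ = ν₀ then ν = ν₀. -/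
/-!
With `X = (1-2ν₊)/(2μ₊)` and `Y = (1-2ν₋)/(2μ₋)` one has `d* = (X - Y)/b`, `b + e = 1/μ₊ + 1/μ₋`
and `b - e = 2(X + Y)`, with `0 < X, Y` and `X + Y < b`. Since `πε = artanh d*`, `cosh²(πε) = 1/(1 - d*²)`,
which gives `1 - ν = b(1 - d*²)/(b + e) = b d₀⁴/(b + e)`, i.e. `ν = (b d*² + e)/(b + e)`.
Then `ν > 0` because `e > 0`, and `ν < 1/2` amounts to `b d*² < X + Y`, which holds because
`(X - Y)² < (X + Y)² < b (X + Y)`. In the homogeneous case `d* = 0` and `ν = e/(b + e) = ν₀`.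
-/

open Real

theorem Real.cosh_sq_half_log_div {d : ℝ} (hd : |d| < 1) :
    cosh (log ((1 + d) / (1 - d)) / 2) ^ 2 = (1 - d ^ 2)⁻¹ := by
  obtain ⟨hd₁, hd₂⟩ := abs_lt.mp hd
  have hp : 0 < 1 + d := by linarith
  have hm : 0 < 1 - d := by linarith
  have hdouble := cosh_two_mul (log ((1 + d) / (1 - d)) / 2)
  rw [mul_div_cancel₀ _ two_ne_zero, cosh_log (div_pos hp hm), sinh_sq] at hdouble
  have hcosh : cosh (log ((1 + d) / (1 - d)) / 2) ^ 2
      = (((1 + d) / (1 - d) + ((1 + d) / (1 - d))⁻¹) / 2 + 1) / 2 := by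
    linarith
  have hsq : 1 - d ^ 2 ≠ 0 := by nlinarith
  rw [hcosh]
  field_simp
  ring

theorem Real.rpow_one_div_four_pow_four {x : ℝ} (hx : 0 ≤ x) : (x ^ ((1 : ℝ) / 4)) ^ 4 = x := by
  simpa using rpow_inv_natCast_pow (n := 4) hx four_ne_zero

theorem sub_two_mul_div_two_mul_pos {μ ν : ℝ} (hμ : 0 < μ) (hν : ν < 1 / 2) :
    0 < (1 - 2 * ν) / (2 * μ) :=
  div_pos (by linarith) (by positivity)

theorem sub_two_mul_div_two_mul_lt {μ ν : ℝ} (hμ : 0 < μ) :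
    (1 - 2 * ν) / (2 * μ) < (1 - ν) / μ := by
  rw [div_lt_div_iff₀ (by positivity) hμ]
  nlinarith

theorem mul_sq_sub_div_lt_add {X Y b : ℝ} (hX : 0 < X) (hY : 0 < Y) (hb : X + Y ≤ b) :
    b * ((X - Y) / b) ^ 2 < X + Y := by
  have hb₀ : 0 < b := by linarith
  rw [show b * ((X - Y) / b) ^ 2 = (X - Y) ^ 2 / b by field_simp, div_lt_iff₀ hb₀]
  nlinarith [mul_pos hX hY]

/-- The Lazarus–Leblond equivalent Poisson ratio `ν`, defined by
`1-ν = ((1-ν₊)/μ₊ + (1-ν₋)/μ₋)/((1/μ₊+1/μ₋) cosh²(πε))`, satisfies `1-ν = b d₀⁴/(b+e)`,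
`0 < ν < 1/2`, and reduces to the common Poisson ratio for a homogeneous body. -/
theorem stmt8 (μp μm νp νm b e dstar d₀ ε ν : ℝ)
    (hμp : 0 < μp) (hμm : 0 < μm)
    (hνp₁ : 0 < νp) (hνp₂ : νp < 1 / 2) (hνm₁ : 0 < νm) (hνm₂ : νm < 1 / 2)
    (hb : b = (1 - νp) / μp + (1 - νm) / μm)
    (he : e = νp / μp + νm / μm)
    (hdstar : dstar = ((1 - 2 * νp) / (2 * μp) - (1 - 2 * νm) / (2 * μm)) / b)
    (hd₀ : d₀ = (1 - dstar ^ 2) ^ ((1 : ℝ) / 4))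
    (hε : ε = (1 / (2 * Real.pi)) * Real.log ((1 + dstar) / (1 - dstar)))
    (hν : 1 - ν = ((1 - νp) / μp + (1 - νm) / μm) /
      ((1 / μp + 1 / μm) * Real.cosh (Real.pi * ε) ^ 2)) :
    1 - ν = b * d₀ ^ 4 / (b + e) ∧ 0 < ν ∧ ν < 1 / 2 ∧
      ((μp = μm ∧ νp = νm) → ν = νp) := by
  set X := (1 - 2 * νp) / (2 * μp) with hX_def
  set Y := (1 - 2 * νm) / (2 * μm) with hY_def
  have hX : 0 < X := sub_two_mul_div_two_mul_pos hμp hνp₂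
  have hY : 0 < Y := sub_two_mul_div_two_mul_pos hμm hνm₂
  have hXY : X + Y < b := hb ▸ add_lt_add (sub_two_mul_div_two_mul_lt hμp) (sub_two_mul_div_two_mul_lt hμm)
  have he₀ : 0 < e := he ▸ by positivity
  have hb_add_e : b + e = 1 / μp + 1 / μm := by rw [hb, he]; field_simp; ring
  have hb_sub_e : b - e = 2 * (X + Y) := by rw [hb, he, hX_def, hY_def]; field_simp; ring
  have hbd : b * dstar ^ 2 < X + Y := hdstar ▸ mul_sq_sub_div_lt_add hX hY hXY.le
  have hd : dstar ^ 2 < 1 := by nlinarith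
  have hcosh : cosh (π * ε) ^ 2 = (1 - dstar ^ 2)⁻¹ := by
    rw [hε, show π * (1 / (2 * π) * log ((1 + dstar) / (1 - dstar)))
      = log ((1 + dstar) / (1 - dstar)) / 2 by field_simp]
    exact cosh_sq_half_log_div ((sq_lt_one_iff_abs_lt_one _).mp hd)
  have h1ν : 1 - ν = b * (1 - dstar ^ 2) / (b + e) := by
    rw [hν, hcosh, ← hb, ← hb_add_e]; field_simp
  have hν_eq : ν = (b * dstar ^ 2 + e) / (b + e) := by
    rw [eq_div_iff (by linarith)]; rw [eq_div_iff (by linarith)] at h1ν; linarith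
  refine ⟨by rwa [hd₀, rpow_one_div_four_pow_four (by linarith)], ?_, ?_, ?_⟩
  · rw [hν_eq]
    exact div_pos (by nlinarith [sq_nonneg dstar]) (by linarith)
  · rw [hν_eq, div_lt_iff₀ (by linarith)]; linarith
  · rintro ⟨rfl, rfl⟩
    have hdstar₀ : dstar = 0 := by rw [hdstar, sub_self, zero_div]
    rw [hν_eq, hdstar₀, hb, he]
    field_simp
    ring
end

section
/- Let G(β) = [[1, -i·sign(β)·d*], [i·sign(β)·d*, 1]] for real β ≠ 0 and |d*| < 1. Define X⁺(β) = d₀·R(B⁺(β)) for Im β ≥ 0 and X⁻(β) = d₀⁻¹·R(B⁻(β)) for Im β ≤ 0, where R(θ) is the 2×2 rotation matrix [[cos θ, -sin θ],[sin θ, cos θ]], B±(β) = -ε log(∓iβ) (principal branch), d₀ = (1-d*²)^{1/4}, ε = (1/π) artanh(d*). Then for all real β ≠ 0, (1/|β|) G(β) = (1/(β₊^{1/2} β₋^{1/2})) X⁺(β) [X⁻(β)]⁻¹, where β₊^{1/2}, β₋^{1/2} denote the boundary values of the branch of the square root analytic in the upper/lower half-plane respectively (β₊^{1/2} = β^{1/2}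 for β>0, = i(-β)^{1/2} for β<0; β₋^{1/2} = β^{1/2} for β>0, = -i(-β)^{1/2} for β<0). -/
/-!
Both factors are scalar multiples of rotations, so `X⁺ (X⁻)⁻¹ = d₀² R(B⁺ - B⁻)`. The principal
logarithm jumps by `iπ sign β` between `-iβ` and `iβ`, so
`B⁺ - B⁻ = i sign β · πε = i sign β · artanh d*`, and `R(ix)` is the hyperbolic matrix
`[[cosh x, -i sinh x], [i sinh x, cosh x]]`. As
`cosh (artanh d*) = 1 / √(1 - d*²) = 1 / d₀²` and `sinh (artanh d*) = d* / d₀²`, this is exactly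
`G(β)`, while `β₊^{1/2} β₋^{1/2} = |β|`.
-/

open Complex Matrix

/-- The rotation matrix `R(θ)`. -/
noncomputable def rotM (θ : ℂ) : Matrix (Fin 2) (Fin 2) ℂ :=
  !![Complex.cos θ, -Complex.sin θ; Complex.sin θ, Complex.cos θ]

/-- Boundary value on `ℝ` of the branch of `√β` analytic in the upper half-plane. -/
noncomputable def sqrtUp (β : ℝ) : ℂ :=
  if 0 < β then (Real.sqrt β : ℂ) else Complex.I * (Real.sqrt (-β) : ℂ)

/-- Boundary value on `ℝ` of the branch of `√β` analytic in the lower half-plane. -/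
noncomputable def sqrtLow (β : ℝ) : ℂ :=
  if 0 < β then (Real.sqrt β : ℂ) else -Complex.I * (Real.sqrt (-β) : ℂ)

theorem rotM_add (a b : ℂ) : rotM (a + b) = rotM a * rotM b := by
  simp only [rotM, mul_fin_two, Complex.cos_add, Complex.sin_add]
  ext i j
  fin_cases i <;> fin_cases j <;> simp <;> ring

theorem rotM_zero : rotM 0 = 1 := by
  simp [rotM, one_fin_two]

theorem inv_smul_rotM {c : ℂ} (hc : c ≠ 0) (θ : ℂ) : (c • rotM θ)⁻¹ = c⁻¹ • rotM (-θ) := by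
  refine inv_eq_right_inv ?_
  rw [smul_mul_smul, ← rotM_add, add_neg_cancel, rotM_zero, mul_inv_cancel₀ hc, one_smul]

theorem smul_rotM_mul_inv_inv_smul_rotM {c : ℂ} (hc : c ≠ 0) (a b : ℂ) :
    c • rotM a * (c⁻¹ • rotM b)⁻¹ = c ^ 2 • rotM (a - b) := by
  rw [inv_smul_rotM (inv_ne_zero hc), inv_inv, smul_mul_smul, ← rotM_add, sq, sub_eq_add_neg]

theorem smul_rotM_mul_I (c x : ℂ) :
    c • rotM (x * I) = !![c * cosh x, -I * (c * sinh x); I * (c * sinh x), c * cosh x] := by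
  rw [rotM, cos_mul_I, sin_mul_I]
  ext i j
  fin_cases i <;> fin_cases j <;> simp [mul_left_comm, mul_comm]

theorem sqrtUp_mul_sqrtLow (β : ℝ) : sqrtUp β * sqrtLow β = |β| := by
  unfold sqrtUp sqrtLow
  split_ifs with hβ
  · rw [← ofReal_mul, Real.mul_self_sqrt hβ.le, abs_of_pos hβ]
  · have hβ' : 0 ≤ -β := by linarith
    calc I * (√(-β) : ℂ) * (-I * √(-β)) = -(I * I) * ((√(-β) * √(-β) : ℝ) : ℂ) := by
          push_cast; ring
      _ = |β| := by rw [I_mul_I, Real.mul_self_sqrt hβ', abs_of_nonpos (not_lt.mp hβ)]; simp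

theorem log_I_mul_ofReal {β : ℝ} (hβ : β ≠ 0) :
    log (I * β) = Real.log |β| + Real.sign β * (Real.pi / 2) * I := by
  rcases hβ.lt_or_gt with hβ | hβ
  · rw [show I * (β : ℂ) = ((-β : ℝ) : ℂ) * -I by push_cast; ring,
      log_ofReal_mul (neg_pos.mpr hβ) (neg_ne_zero.mpr I_ne_zero), log_neg_I,
      Real.sign_of_neg hβ, abs_of_neg hβ]
    push_cast; ring
  · rw [mul_comm, log_ofReal_mul hβ I_ne_zero, log_I, Real.sign_of_pos hβ, abs_of_pos hβ]
    push_cast; ring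

theorem log_neg_I_mul_ofReal_sub_log_I_mul_ofReal {β : ℝ} (hβ : β ≠ 0) :
    log (-I * β) - log (I * β) = -(Real.sign β * Real.pi * I) := by
  rw [show -I * (β : ℂ) = I * ((-β : ℝ) : ℂ) by push_cast; ring,
    log_I_mul_ofReal hβ, log_I_mul_ofReal (neg_ne_zero.mpr hβ), abs_neg, Real.sign_neg]
  push_cast; ring

theorem Real.cosh_sign_mul {β : ℝ} (hβ : β ≠ 0) (x : ℝ) :
    Real.cosh (Real.sign β * x) = Real.cosh x := by
  rcases Real.sign_apply_eq_of_ne_zero β hβ with h | h <;> simp [h]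

theorem Real.sinh_sign_mul (β x : ℝ) :
    Real.sinh (Real.sign β * x) = Real.sign β * Real.sinh x := by
  rcases lt_trichotomy β 0 with h | rfl | h
  · simp [Real.sign_of_neg h]
  · simp
  · simp [Real.sign_of_pos h]

theorem rpow_quarter_sq {x : ℝ} (hx : 0 ≤ x) : (x ^ ((1 : ℝ) / 4)) ^ 2 = √x := by
  rw [← Real.rpow_natCast, ← Real.rpow_mul hx, Real.sqrt_eq_rpow]
  norm_num

/-- The Wiener–Hopf factorization `(1/|β|) G(β) = (1/(β₊^{1/2} β₋^{1/2})) X⁺(β) [X⁻(β)]⁻¹`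
holds pointwise for all real `β ≠ 0`, where `X±(β) = d₀^{±1} R(B±(β))`,
`B±(β) = -ε log(∓iβ)` (principal branch), `d₀ = (1-d*²)^{1/4}`, `ε = (1/π) artanh d*`. -/
theorem stmt9 (d ε d₀ : ℝ) (hd : |d| < 1)
    (hε : ε = (1 / (2 * Real.pi)) * Real.log ((1 + d) / (1 - d)))
    (hd₀ : d₀ = (1 - d ^ 2) ^ ((1 : ℝ) / 4)) :
    ∀ β : ℝ, β ≠ 0 →
      ((|β|⁻¹ : ℝ) : ℂ) •
          (!![1, -Complex.I * (Real.sign β : ℂ) * (d : ℂ);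
              Complex.I * (Real.sign β : ℂ) * (d : ℂ), 1] : Matrix (Fin 2) (Fin 2) ℂ) =
        (sqrtUp β * sqrtLow β)⁻¹ •
          (((d₀ : ℂ) • rotM (-(ε : ℂ) * Complex.log (-Complex.I * (β : ℂ)))) *
            (((d₀ : ℂ)⁻¹ • rotM (-(ε : ℂ) * Complex.log (Complex.I * (β : ℂ))))⁻¹)) := by
  intro β hβ
  have hd' : d ∈ Set.Ioo (-1) 1 := abs_lt.mp hd
  have hεπ : ε * Real.pi = Real.artanh d := by
    rw [hε, Real.artanh_eq_half_log (Set.Ioo_subset_Icc_self hd')]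
    field_simp
  have hpos : 0 < 1 - d ^ 2 := by nlinarith [hd'.1, hd'.2]
  have hsqrt : √(1 - d ^ 2) ≠ 0 := (Real.sqrt_pos.mpr hpos).ne'
  have hd₀sq : (d₀ : ℂ) ^ 2 = √(1 - d ^ 2) := by
    rw [← ofReal_pow, hd₀, rpow_quarter_sq hpos.le]
  have hd₀ne : (d₀ : ℂ) ≠ 0 := ofReal_ne_zero.mpr (hd₀ ▸ (Real.rpow_pos_of_pos hpos _).ne')
  have hangle : -(ε : ℂ) * log (-I * β) - -(ε : ℂ) * log (I * β)
      = ((Real.sign β * Real.artanh d : ℝ) : ℂ) * I := by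
    rw [← mul_sub, log_neg_I_mul_ofReal_sub_log_I_mul_ofReal hβ, ← hεπ]
    push_cast; ring
  have hcosh : (d₀ : ℂ) ^ 2 * cosh ((Real.sign β * Real.artanh d : ℝ) : ℂ) = 1 := by
    rw [← ofReal_cosh, Real.cosh_sign_mul hβ, Real.cosh_artanh hd', hd₀sq, ← ofReal_mul,
      mul_one_div_cancel hsqrt, ofReal_one]
  have hsinh : (d₀ : ℂ) ^ 2 * sinh ((Real.sign β * Real.artanh d : ℝ) : ℂ) = Real.sign β * d := by
    rw [← ofReal_sinh, Real.sinh_sign_mul, Real.sinh_artanh hd', hd₀sq, ← ofReal_mul,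
      mul_left_comm, mul_div_cancel₀ _ hsqrt, ofReal_mul]
  rw [smul_rotM_mul_inv_inv_smul_rotM hd₀ne, hangle, smul_rotM_mul_I, hcosh, hsinh,
    sqrtUp_mul_sqrtLow, ofReal_inv]
  simp only [mul_assoc]
end
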